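/- For λ ∈ [0,1] and proper convex lower semi-continuous coercive functions φ, φ̃ : ℝ^d → (-∞,∞], with Γ(φ) = ∫φ dP + ∫ e^{-φ}: Γ(λφ + (1-λ)φ̃) ≤ λΓ(φ) + (1-λ)Γ(φ̃) - (λ(1-λ)/2) ∫_{ℝ^d} e^{-max{φ(x), φ̃(x)}} (φ(x) - φ̃(x))^2 dx, where the integrand is taken to be zero whenever max{φ(x), φ̃(x)} = ∞. -/

import Mathlib

open MeasureTheory

/-- The class `C_d` of proper, convex, lower semi-continuous, coercive functions
`ℝ^d → (-∞, ∞]`, encoded with values in `EReal`. -/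
def CdE (d : ℕ) (φ : EuclideanSpace ℝ (Fin d) → EReal) : Prop :=
  LowerSemicontinuous φ ∧
  (∀ x, φ x ≠ ⊥) ∧ (∃ x, φ x ≠ ⊤) ∧
  (∀ x y : EuclideanSpace ℝ (Fin d), ∀ l : ℝ, 0 ≤ l → l ≤ 1 →
    φ (l • x + (1 - l) • y) ≤ (l : EReal) * φ x + ((1 - l : ℝ) : EReal) * φ y) ∧
  Filter.Tendsto φ (Filter.cocompact _) Filter.atTop

/-- Positive part of an extended real, as `ℝ≥0∞`. -/
noncomputable def eposPart (y : EReal) : ENNReal :=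
  if y = ⊤ then ⊤ else ENNReal.ofReal y.toReal

/-- Extended-real-valued integral of an `EReal`-valued function. -/
noncomputable def eIntegral {α : Type*} [MeasurableSpace α] (μ : Measure α)
    (f : α → EReal) : EReal :=
  ((∫⁻ x, eposPart (f x) ∂μ : ENNReal) : EReal) -
    ((∫⁻ x, eposPart (-(f x)) ∂μ : ENNReal) : EReal)

/-- `e^{-y}`, with `e^{-∞} = 0`. -/
noncomputable def negExpE (y : EReal) : ℝ :=
  if y = ⊤ then 0 else Real.exp (-(y.toReal))

/-- The objective `Γ(φ) = ∫ φ dP + ∫ e^{-φ(x)} dx`. -/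
noncomputable def GammaLC (d : ℕ) (P : Measure (EuclideanSpace ℝ (Fin d)))
    (φ : EuclideanSpace ℝ (Fin d) → EReal) : EReal :=
  eIntegral P φ +
    ((∫⁻ x, ENNReal.ofReal (negExpE (φ x)) ∂(volume : Measure (EuclideanSpace ℝ (Fin d)))
      : ENNReal) : EReal)

/-!
For finite values `a = φ x`, `b = φ̃ x`, the map `y ↦ e^{-y}` is `e^{-max a b}`-strongly convex on
`(-∞, max a b]`, which is the pointwise form of the inequality for the exponential part; the
positive and negative parts of `λ a + (1 - λ) b` recombine exactly, so the linear part is affine.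
Where `φ x` or `φ̃ x` is `∞`, so is the combination, and the pointwise inequalities are trivial.

Integrating needs the subtracted integrals to be finite: `φ` attains its minimum (it is lower
semicontinuous and coercive), so `∫ φ⁻ dP < ∞`; a convex coercive function grows at least
linearly, so `∫ e^{-φ} < ∞`, and this also bounds the remainder integral.
-/

open Real Set Filter Topology MeasureTheory
open scoped ENNReal

lemma strongConvexOn_exp_neg_Iic (M : ℝ) :
    StrongConvexOn (Iic M) (exp (-M)) fun y => exp (-y) := by
  have hderiv (y : ℝ) : HasDerivAt (fun y => exp (-y) - exp (-M) / 2 * ‖y‖ ^ 2)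
      (-exp (-y) - exp (-M) * y) y := by
    simp only [Real.norm_eq_abs, sq_abs]
    exact (((hasDerivAt_neg y).exp).sub
      ((hasDerivAt_pow 2 y).const_mul (exp (-M) / 2))).congr_deriv (by norm_num; ring)
  rw [strongConvexOn_iff_convex]
  refine MonotoneOn.convexOn_of_deriv (convex_Iic M) (by fun_prop)
    (fun y _ => (hderiv y).differentiableAt.differentiableWithinAt) ?_
  rw [interior_Iic]
  intro y _ z hz hyz
  simp only [(hderiv _).deriv]
  -- Tangent line of `e^{-·}` at `z`, then `e^{-z} ≥ e^{-M}`: the derivative is monotone.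
  have h_tangent : exp (-z) * (z - y + 1) ≤ exp (-y) :=
    calc exp (-z) * (z - y + 1) ≤ exp (-z) * exp (z - y) := by gcongr; exact add_one_le_exp _
      _ = exp (-y) := by rw [← exp_add]; congr 1; ring
  have h_level : exp (-M) ≤ exp (-z) := exp_le_exp.2 (by linarith [mem_Iio.1 hz])
  nlinarith [sub_nonneg.2 hyz]

lemma exp_neg_convexComb_add_le {l : ℝ} (hl0 : 0 ≤ l) (hl1 : l ≤ 1) (a b : ℝ) :
    exp (-(l * a + (1 - l) * b)) + l * (1 - l) / 2 * (exp (-max a b) * (a - b) ^ 2) ≤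
      l * exp (-a) + (1 - l) * exp (-b) := by
  have := (strongConvexOn_exp_neg_Iic (max a b)).2 (le_max_left a b) (le_max_right a b) hl0
    (sub_nonneg.2 hl1) (add_sub_cancel l 1)
  simp only [smul_eq_mul, Real.norm_eq_abs, sq_abs] at this
  linarith

lemma integrable_exp_neg_mul_norm {E : Type*} [NormedAddCommGroup E] [NormedSpace ℝ E]
    [FiniteDimensional ℝ E] [MeasurableSpace E] [BorelSpace E] (μ : Measure E)
    [μ.IsAddHaarMeasure] {ε : ℝ} (hε : 0 < ε) :
    Integrable (fun x => exp (-(ε * ‖x‖))) μ := by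
  set N := Module.finrank ℝ E + 1
  have h_decay (t : ℝ) (ht : 0 ≤ t) :
      exp (-t) ≤ exp 1 * N.factorial * (1 + t) ^ (-(N : ℝ)) := by
    have := pow_div_factorial_le_exp (x := 1 + t) (by linarith) N
    rw [exp_add, div_le_iff₀ (by positivity)] at this
    rw [rpow_neg (by linarith), rpow_natCast, exp_neg, ← div_eq_mul_inv,
      le_div_iff₀ (by positivity), inv_mul_le_iff₀ (exp_pos t)]
    linarith
  have h_one : Integrable (fun x : E => exp (-‖x‖)) μ := by
    refine ((integrable_one_add_norm (r := N) (by simp [N])).const_mul (exp 1 * N.factorial)).mono'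
      (by fun_prop) (Eventually.of_forall fun x => ?_)
    rw [norm_of_nonneg (exp_pos _).le]
    exact h_decay _ (norm_nonneg x)
  convert h_one.comp_smul hε.ne' using 2 with x
  rw [norm_smul, norm_of_nonneg hε.le]

namespace EReal

lemma coe_ennreal_sub_add_coe_ennreal_sub (a b c d : ℝ≥0∞) :
    ((a : EReal) - b) + (c - d) = ↑(a + c) - ↑(b + d) := by
  rw [sub_eq_add_neg, sub_eq_add_neg, sub_eq_add_neg, coe_ennreal_add, coe_ennreal_add,
    EReal.neg_add (.inl (coe_ennreal_ne_bot b)) (.inr (coe_ennreal_ne_bot d)),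
    sub_eq_add_neg, add_add_add_comm]

lemma coe_ennreal_sub_sub (a b c : ℝ≥0∞) :
    ((a : EReal) - b) - c = a - ↑(b + c) := by
  rw [sub_eq_add_neg, sub_eq_add_neg, sub_eq_add_neg, coe_ennreal_add,
    EReal.neg_add (.inl (coe_ennreal_ne_bot b)) (.inr (coe_ennreal_ne_bot c)), sub_eq_add_neg,
    add_assoc]

lemma coe_mul_coe_ennreal {l : ℝ} (hl : 0 ≤ l) (a : ℝ≥0∞) :
    (l : EReal) * a = ↑(ENNReal.ofReal l * a) := by
  rw [coe_ennreal_mul, coe_ennreal_ofReal, max_eq_left hl]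

lemma coe_mul_coe_ennreal_sub {l : ℝ} (hl : 0 ≤ l) (a b : ℝ≥0∞) :
    (l : EReal) * (a - b) = ↑(ENNReal.ofReal l * a) - ↑(ENNReal.ofReal l * b) := by
  rw [mul_sub_of_nonneg_of_ne_top (EReal.coe_nonneg.2 hl) (coe_ne_top l),
    coe_mul_coe_ennreal hl, coe_mul_coe_ennreal hl]

lemma coe_ennreal_sub_le_coe_ennreal_sub {a b c d : ℝ≥0∞} (hd : d ≠ ⊤) (h : a + d ≤ c + b) :
    (a : EReal) - b ≤ c - d := by
  rcases eq_or_ne c ⊤ with rfl | hc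
  · lift d to NNReal using hd
    simp [coe_nnreal_eq_coe_real]
  rcases eq_or_ne b ⊤ with rfl | hb
  · simp
  have ha : a ≠ ⊤ := ne_top_of_le_ne_top (by finiteness) (le_self_add.trans h)
  lift a to NNReal using ha
  lift b to NNReal using hb
  lift c to NNReal using hc
  lift d to NNReal using hd
  have h' : (a : ℝ) + d ≤ c + b := by exact_mod_cast h
  simp only [coe_nnreal_eq_coe_real, ← coe_sub, EReal.coe_le_coe_iff]
  linarith

lemma coe_mul_ne_bot {c : ℝ} (hc : 0 ≤ c) {z : EReal} (hz : z ≠ ⊥) : (c : EReal) * z ≠ ⊥ :=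
  (mul_ne_bot _ _).2
    ⟨.inl (coe_ne_bot c), .inr hz, .inl (coe_ne_top c), .inl (EReal.coe_nonneg.2 hc)⟩

lemma convexComb_eq_top {l : ℝ} (hl0 : 0 < l) (hl1 : l < 1) {y z : EReal} (hy : y ≠ ⊥)
    (hz : z ≠ ⊥) (h : y = ⊤ ∨ z = ⊤) :
    (l : EReal) * y + ((1 - l : ℝ) : EReal) * z = ⊤ := by
  rcases h with rfl | rfl
  · rw [coe_mul_top_of_pos hl0]
    exact top_add_of_ne_bot (coe_mul_ne_bot (by linarith) hz)
  · rw [coe_mul_top_of_pos (by linarith)]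
    exact add_top_of_ne_bot (coe_mul_ne_bot hl0.le hy)

lemma toENNReal_convexComb_add {l : ℝ} (hl0 : 0 < l) (hl1 : l < 1) {y z : EReal}
    (hy : y ≠ ⊥) (hz : z ≠ ⊥) :
    ((l : EReal) * y + ((1 - l : ℝ) : EReal) * z).toENNReal + ENNReal.ofReal l * (-y).toENNReal
        + ENNReal.ofReal (1 - l) * (-z).toENNReal =
      ENNReal.ofReal l * y.toENNReal + ENNReal.ofReal (1 - l) * z.toENNReal
        + (-((l : EReal) * y + ((1 - l : ℝ) : EReal) * z)).toENNReal := by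
  by_cases h : y = ⊤ ∨ z = ⊤
  · rw [convexComb_eq_top hl0 hl1 hy hz h]
    rcases h with rfl | rfl <;> simp [hl0, hl1]
  obtain ⟨hy', hz'⟩ := not_or.1 h
  lift y to ℝ using ⟨hy', hy⟩
  lift z to ℝ using ⟨hz', hz⟩
  rw [← EReal.coe_mul, ← EReal.coe_mul, ← EReal.coe_add]
  simp only [← EReal.coe_neg, EReal.real_coe_toENNReal]
  rw [← ENNReal.toReal_eq_toReal_iff' (by finiteness) (by finiteness)]
  simp only [ne_eq, ENNReal.add_eq_top, ENNReal.mul_eq_top, ENNReal.ofReal_ne_top, and_false,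
    false_and, or_self, not_false_eq_true, ENNReal.toReal_add, ENNReal.toReal_mul,
    ENNReal.toReal_ofReal', max_eq_left hl0.le, max_eq_left (by linarith : (0 : ℝ) ≤ 1 - l)]
  linear_combination max_zero_sub_max_neg_zero_eq_self (l * y + (1 - l) * z)
    - l * max_zero_sub_max_neg_zero_eq_self y - (1 - l) * max_zero_sub_max_neg_zero_eq_self z

end EReal

lemma eposPart_eq_toENNReal : eposPart = EReal.toENNReal := by
  ext y
  rfl

lemma negExpE_coe (a : ℝ) : negExpE a = exp (-a) := by simp [negExpE]

lemma negExpE_top : negExpE ⊤ = 0 := by simp [negExpE]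

lemma negExpE_nonneg (y : EReal) : 0 ≤ negExpE y := by
  unfold negExpE
  split <;> positivity

lemma measurable_negExpE : Measurable negExpE :=
  Measurable.ite (measurableSet_singleton ⊤) measurable_const
    (measurable_ereal_toReal.neg.exp)

lemma negExpE_le_exp_neg {y : EReal} {r : ℝ} (h : (r : EReal) ≤ y) : negExpE y ≤ exp (-r) := by
  induction y with
  | bot => simp at h
  | coe a => simpa [negExpE] using EReal.coe_le_coe_iff.1 h
  | top => simpa [negExpE] using (exp_pos _).le

namespace CdE

variable {d : ℕ} {φ : EuclideanSpace ℝ (Fin d) → EReal}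

lemma exists_forall_le (hφ : CdE d φ) : ∃ x₀, φ x₀ ≠ ⊤ ∧ ∀ x, φ x₀ ≤ φ x := by
  obtain ⟨hlsc, -, ⟨x₁, hx₁⟩, -, hcoer⟩ := hφ
  obtain ⟨K, hK, hKφ⟩ := mem_cocompact.1
    (hcoer.eventually_ge_atTop (((φ x₁).toReal + 1 : ℝ) : EReal))
  obtain ⟨x₀, -, hmin⟩ :=
    (hlsc.lowerSemicontinuousOn _).exists_isMinOn (insert_nonempty x₁ K) (hK.insert x₁)
  have hx₀ : φ x₀ ≤ φ x₁ := hmin (mem_insert x₁ K)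
  refine ⟨x₀, ne_top_of_le_ne_top hx₁ hx₀, fun x => ?_⟩
  by_cases hx : x ∈ K
  · exact hmin (mem_insert_of_mem x₁ hx)
  · refine hx₀.trans ((EReal.le_coe_toReal hx₁).trans (le_trans ?_ (hKφ hx)))
    exact EReal.coe_le_coe_iff.2 (by linarith)

lemma exists_linear_growth (hφ : CdE d φ) :
    ∃ x₀, ∃ ε C : ℝ, 0 < ε ∧ ∀ x, ((ε * ‖x - x₀‖ - C : ℝ) : EReal) ≤ φ x := by
  obtain ⟨x₀, hx₀, hmin⟩ := hφ.exists_forall_le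
  obtain ⟨-, hbot, -, hconv, hcoer⟩ := hφ
  set c := (φ x₀).toReal
  have hφx₀ : φ x₀ = c := (EReal.coe_toReal hx₀ (hbot x₀)).symm
  have h_far : ∀ᶠ z in Bornology.cobounded _, ((c + 1 : ℝ) : EReal) ≤ φ z := by
    rw [Metric.cobounded_eq_cocompact]
    exact hcoer.eventually_ge_atTop _
  obtain ⟨r, -, hr⟩ := (Metric.hasBasis_cobounded_compl_closedBall x₀).eventually_iff.1 h_far
  set s := max r 0 + 1
  have hs : 0 < s := by positivity
  refine ⟨x₀, s⁻¹, 1 - c, inv_pos.2 hs, fun x => ?_⟩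
  rcases eq_or_ne (φ x) ⊤ with hx | hx
  · simp [hx]
  set a := (φ x).toReal
  have hφx : φ x = a := (EReal.coe_toReal hx (hbot x)).symm
  rw [hφx, EReal.coe_le_coe_iff]
  rcases le_or_gt ‖x - x₀‖ s with hnear | hfar
  · have : c ≤ a := by exact_mod_cast hφx₀ ▸ hφx ▸ hmin x
    have : s⁻¹ * ‖x - x₀‖ ≤ 1 := by rwa [inv_mul_le_iff₀ hs, mul_one]
    linarith
  -- On the segment from `x₀` to `x`, the point at distance `s` from `x₀` is where `φ ≥ c + 1`.
  set t := s / ‖x - x₀‖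
  have ht0 : 0 < t := div_pos hs (hs.trans hfar)
  have ht1 : t < 1 := (div_lt_one (hs.trans hfar)).2 hfar
  have hz : dist (t • x + (1 - t) • x₀) x₀ = s := by
    rw [dist_eq_norm, show t • x + (1 - t) • x₀ - x₀ = t • (x - x₀) by module, norm_smul,
      norm_of_nonneg ht0.le, div_mul_cancel₀ _ (hs.trans hfar).ne']
  have h_seg := (hr (by
    rw [mem_compl_iff, Metric.mem_closedBall, hz, not_le]
    exact (le_max_left r 0).trans_lt (lt_add_one _))).trans (hconv x x₀ t ht0.le ht1.le)
  rw [hφx, hφx₀, ← EReal.coe_mul, ← EReal.coe_mul, ← EReal.coe_add, EReal.coe_le_coe_iff] at h_seg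
  have : t⁻¹ ≤ a - c := (inv_le_iff_one_le_mul₀' ht0).2 (by linarith)
  rw [inv_div, div_eq_inv_mul] at this
  linarith

lemma exists_coe_le (hφ : CdE d φ) : ∃ m : ℝ, ∀ x, (m : EReal) ≤ φ x := by
  obtain ⟨x₀, hx₀, hmin⟩ := hφ.exists_forall_le
  exact ⟨(φ x₀).toReal, fun x => (EReal.coe_toReal hx₀ (hφ.2.1 x₀)).symm ▸ hmin x⟩

lemma lintegral_negExpE_lt_top (hφ : CdE d φ) :
    ∫⁻ x, ENNReal.ofReal (negExpE (φ x)) < ⊤ := by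
  obtain ⟨x₀, ε, C, hε, hgrowth⟩ := hφ.exists_linear_growth
  have hint : Integrable (fun x => exp C * exp (-(ε * ‖x - x₀‖))) :=
    ((integrable_exp_neg_mul_norm volume hε).comp_sub_right x₀).const_mul _
  refine lt_of_le_of_lt (lintegral_mono fun x => ENNReal.ofReal_le_ofReal ?_) hint.lintegral_lt_top
  calc negExpE (φ x) ≤ exp (-(ε * ‖x - x₀‖ - C)) := negExpE_le_exp_neg (hgrowth x)
    _ = exp C * exp (-(ε * ‖x - x₀‖)) := by rw [← exp_add]; ring_nf

end CdE

noncomputable def strongConvexityTerm (y z : EReal) : ℝ :=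
  if y = ⊤ ∨ z = ⊤ then 0 else exp (-max y.toReal z.toReal) * (y.toReal - z.toReal) ^ 2

lemma strongConvexityTerm_nonneg (y z : EReal) : 0 ≤ strongConvexityTerm y z := by
  unfold strongConvexityTerm
  split <;> positivity

lemma negExpE_convexComb_add_le {l : ℝ} (hl0 : 0 < l) (hl1 : l < 1) {y z : EReal}
    (hy : y ≠ ⊥) (hz : z ≠ ⊥) :
    negExpE ((l : EReal) * y + ((1 - l : ℝ) : EReal) * z)
        + l * (1 - l) / 2 * strongConvexityTerm y z ≤
      l * negExpE y + (1 - l) * negExpE z := by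
  by_cases h : y = ⊤ ∨ z = ⊤
  · rw [EReal.convexComb_eq_top hl0 hl1 hy hz h, negExpE_top, strongConvexityTerm, if_pos h]
    have := negExpE_nonneg y
    have := negExpE_nonneg z
    have : 0 ≤ 1 - l := by linarith
    simp only [mul_zero, add_zero]
    positivity
  obtain ⟨hy', hz'⟩ := not_or.1 h
  lift y to ℝ using ⟨hy', hy⟩
  lift z to ℝ using ⟨hz', hz⟩
  rw [← EReal.coe_mul, ← EReal.coe_mul, ← EReal.coe_add, negExpE_coe, negExpE_coe, negExpE_coe,
    strongConvexityTerm, if_neg h, EReal.toReal_coe, EReal.toReal_coe]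
  exact exp_neg_convexComb_add_le hl0.le hl1.le y z

section Integration

variable {α : Type*} [MeasurableSpace α] (μ : Measure α) {l : ℝ} {f g : α → EReal}

lemma lintegral_toENNReal_neg_ne_top [IsFiniteMeasure μ] {m : ℝ} (hm : ∀ x, (m : EReal) ≤ f x) :
    ∫⁻ x, (-f x).toENNReal ∂μ ≠ ⊤ := by
  refine ne_top_of_le_ne_top (lintegral_const_lt_top (μ := μ) (ENNReal.ofReal_ne_top (r := -m))).ne
    (lintegral_mono fun x => ?_)
  rw [← EReal.real_coe_toENNReal, EReal.coe_neg]
  exact EReal.toENNReal_le_toENNReal (EReal.neg_le_neg_iff.2 (hm x))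

lemma lintegral_toENNReal_convexComb_add (hl0 : 0 < l) (hl1 : l < 1) (hf : Measurable f)
    (hg : Measurable g) (hf_bot : ∀ x, f x ≠ ⊥) (hg_bot : ∀ x, g x ≠ ⊥) :
    ∫⁻ x, ((l : EReal) * f x + ((1 - l : ℝ) : EReal) * g x).toENNReal ∂μ
        + ENNReal.ofReal l * ∫⁻ x, (-f x).toENNReal ∂μ
        + ENNReal.ofReal (1 - l) * ∫⁻ x, (-g x).toENNReal ∂μ =
      ENNReal.ofReal l * ∫⁻ x, (f x).toENNReal ∂μ
        + ENNReal.ofReal (1 - l) * ∫⁻ x, (g x).toENNReal ∂μ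
        + ∫⁻ x, (-((l : EReal) * f x + ((1 - l : ℝ) : EReal) * g x)).toENNReal ∂μ := by
  have hw : Measurable fun x => (l : EReal) * f x + ((1 - l : ℝ) : EReal) * g x := by fun_prop
  simp only [← lintegral_const_mul' _ _ ENNReal.ofReal_ne_top]
  rw [← lintegral_add_left hw.ereal_toENNReal, ← lintegral_add_left (by fun_prop),
    ← lintegral_add_left (by fun_prop), ← lintegral_add_left (by fun_prop)]
  exact lintegral_congr fun x => EReal.toENNReal_convexComb_add hl0 hl1 (hf_bot x) (hg_bot x)

lemma lintegral_negExpE_convexComb_add_le (hl0 : 0 < l) (hl1 : l < 1) (hf : Measurable f)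
    (hg : Measurable g) (hf_bot : ∀ x, f x ≠ ⊥) (hg_bot : ∀ x, g x ≠ ⊥) :
    ∫⁻ x, ENNReal.ofReal (negExpE ((l : EReal) * f x + ((1 - l : ℝ) : EReal) * g x)) ∂μ
        + ENNReal.ofReal (l * (1 - l) / 2)
          * ∫⁻ x, ENNReal.ofReal (strongConvexityTerm (f x) (g x)) ∂μ ≤
      ENNReal.ofReal l * ∫⁻ x, ENNReal.ofReal (negExpE (f x)) ∂μ
        + ENNReal.ofReal (1 - l) * ∫⁻ x, ENNReal.ofReal (negExpE (g x)) ∂μ := by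
  have hf' : Measurable fun x => ENNReal.ofReal (negExpE (f x)) :=
    ENNReal.measurable_ofReal.comp (measurable_negExpE.comp hf)
  have hg' : Measurable fun x => ENNReal.ofReal (negExpE (g x)) :=
    ENNReal.measurable_ofReal.comp (measurable_negExpE.comp hg)
  rw [← lintegral_const_mul' _ _ ENNReal.ofReal_ne_top, ← lintegral_const_mul _ hf',
    ← lintegral_const_mul _ hg', ← lintegral_add_left (hf'.const_mul _)]
  refine (le_lintegral_add _ _).trans (lintegral_mono fun x => ?_)
  have hl1' : 0 ≤ 1 - l := by linarith
  have hk : 0 ≤ l * (1 - l) / 2 := by positivity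
  have h := ENNReal.ofReal_le_ofReal (negExpE_convexComb_add_le hl0 hl1 (hf_bot x) (hg_bot x))
  rwa [ENNReal.ofReal_add (negExpE_nonneg _) (mul_nonneg hk (strongConvexityTerm_nonneg _ _)),
    ENNReal.ofReal_add (mul_nonneg hl0.le (negExpE_nonneg _)) (mul_nonneg hl1' (negExpE_nonneg _)),
    ENNReal.ofReal_mul hk, ENNReal.ofReal_mul hl0.le, ENNReal.ofReal_mul hl1'] at h

end Integration

lemma GammaLC_eq (d : ℕ) (P : Measure (EuclideanSpace ℝ (Fin d)))
    (φ : EuclideanSpace ℝ (Fin d) → EReal) :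
    GammaLC d P φ = ↑(∫⁻ x, (φ x).toENNReal ∂P + ∫⁻ x, ENNReal.ofReal (negExpE (φ x)))
      - ↑(∫⁻ x, (-φ x).toENNReal ∂P) := by
  rw [GammaLC, eIntegral, eposPart_eq_toENNReal, EReal.coe_ennreal_add, sub_eq_add_neg,
    sub_eq_add_neg, add_right_comm]

theorem Gamma_strong_convexity (d : ℕ) (P : Measure (EuclideanSpace ℝ (Fin d)))
    [IsProbabilityMeasure P] (l : ℝ) (hl0 : 0 ≤ l) (hl1 : l ≤ 1)
    (φ φt : EuclideanSpace ℝ (Fin d) → EReal) (hφ : CdE d φ) (hφt : CdE d φt) :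
    GammaLC d P (fun x => (l : EReal) * φ x + ((1 - l : ℝ) : EReal) * φt x) ≤
      (l : EReal) * GammaLC d P φ + ((1 - l : ℝ) : EReal) * GammaLC d P φt -
        ((l * (1 - l) / 2 : ℝ) : EReal) *
          ((∫⁻ x, ENNReal.ofReal
              (if φ x = ⊤ ∨ φt x = ⊤ then 0
               else Real.exp (-(max (φ x).toReal (φt x).toReal)) *
                 ((φ x).toReal - (φt x).toReal) ^ 2)
              ∂(volume : Measure (EuclideanSpace ℝ (Fin d))) : ENNReal) : EReal) := by
  rcases hl0.eq_or_lt with rfl | hl0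
  · simp
  rcases hl1.eq_or_lt with rfl | hl1
  · simp
  have h_lin := lintegral_toENNReal_convexComb_add P hl0 hl1 hφ.1.measurable hφt.1.measurable
    hφ.2.1 hφt.2.1
  have h_exp := lintegral_negExpE_convexComb_add_le volume hl0 hl1 hφ.1.measurable
    hφt.1.measurable hφ.2.1 hφt.2.1
  obtain ⟨m, hm⟩ := hφ.exists_coe_le
  obtain ⟨m', hm'⟩ := hφt.exists_coe_le
  have hE := hφ.lintegral_negExpE_lt_top
  have hE' := hφt.lintegral_negExpE_lt_top
  have hQ := ne_top_of_le_ne_top (by finiteness) (le_add_self.trans h_exp)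
  unfold strongConvexityTerm at h_exp hQ
  rw [GammaLC_eq, GammaLC_eq, GammaLC_eq, EReal.coe_mul_coe_ennreal_sub hl0.le,
    EReal.coe_mul_coe_ennreal_sub (by linarith), EReal.coe_ennreal_sub_add_coe_ennreal_sub,
    EReal.coe_mul_coe_ennreal (by positivity), EReal.coe_ennreal_sub_sub]
  refine EReal.coe_ennreal_sub_le_coe_ennreal_sub ?_ ?_
  · have := lintegral_toENNReal_neg_ne_top P hm
    have := lintegral_toENNReal_neg_ne_top P hm'
    finiteness
  calc _ = _ := by ring
    _ ≤ _ := add_le_add h_lin.le h_exp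
    _ = _ := by ring
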